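/- Min-entropy of classical-quantum states: Let ρ_ABX be a normalized state on H_A ⊗ H_B ⊗ H_X of the form ρ_ABX = Σ_x p_x ρ^x_AB ⊗ |x⟩⟨x|_X, where {|x⟩} is an orthonormal basis of H_X, each ρ^x_AB is a normalized state on H_A ⊗ H_B, and (p_x) is a probability distribution. Then H_min(A|BX)_ρ = −log ( Σ_x p_x · 2^{−H_min(A|B)_{ρ^x}} ). -/

import Mathlib

open scoped Kronecker ComplexOrder Classical
open Matrix MeasureTheory

noncomputable section

/-- Positive semidefinite square root (junk value `0` if not PSD). -/
def psqrt {n : Type*} [Fintype n] [DecidableEq n] (ρ : Matrix n n ℂ) : Matrix n n ℂ :=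
  if h : ρ.PosSemidef then
    (h.1.eigenvectorUnitary : Matrix n n ℂ) *
      Matrix.diagonal ((↑) ∘ Real.sqrt ∘ h.1.eigenvalues) *
      (star h.1.eigenvectorUnitary : Matrix n n ℂ)
  else 0

/-- Trace norm `‖M‖₁ = tr √(MᴴM)`. -/
def traceNorm {n : Type*} [Fintype n] [DecidableEq n] (M : Matrix n n ℂ) : ℝ :=
  (psqrt (Mᴴ * M)).trace.re

/-- Moore–Penrose real power of a Hermitian matrix via the spectral decomposition
(junk value `0` for non-Hermitian input).  For negative exponents, zero eigenvalues are
sent to zero (`Real.rpow` convention), i.e. inverses are generalized inverses. -/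
def mpow {n : Type*} [Fintype n] [DecidableEq n] (ρ : Matrix n n ℂ) (p : ℝ) : Matrix n n ℂ :=
  if h : ρ.IsHermitian then
    (h.eigenvectorUnitary : Matrix n n ℂ) *
      Matrix.diagonal (fun i => ((h.eigenvalues i ^ p : ℝ) : ℂ)) *
      (star h.eigenvectorUnitary : Matrix n n ℂ)
  else 0

/-- Subnormalized state: positive semidefinite with trace at most one. -/
def IsSubnormalized {n : Type*} [Fintype n] (ρ : Matrix n n ℂ) : Prop :=
  ρ.PosSemidef ∧ ρ.trace.re ≤ 1

/-- Normalized state: positive semidefinite with trace one. -/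
def IsState {n : Type*} [Fintype n] (ρ : Matrix n n ℂ) : Prop :=
  ρ.PosSemidef ∧ ρ.trace = 1

/-- Fidelity `F(ρ,σ) = ‖√ρ √σ‖₁`. -/
def fidelity {n : Type*} [Fintype n] [DecidableEq n] (ρ σ : Matrix n n ℂ) : ℝ :=
  traceNorm (psqrt ρ * psqrt σ)

/-- Generalized fidelity of subnormalized states. -/
def gFidelity {n : Type*} [Fintype n] [DecidableEq n] (ρ σ : Matrix n n ℂ) : ℝ :=
  fidelity ρ σ + Real.sqrt ((1 - ρ.trace.re) * (1 - σ.trace.re))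

/-- Purified distance `P(ρ,σ) = √(1 − F̄(ρ,σ)²)`. -/
def pdist {n : Type*} [Fintype n] [DecidableEq n] (ρ σ : Matrix n n ℂ) : ℝ :=
  Real.sqrt (1 - gFidelity ρ σ ^ 2)

/-- Partial trace over the first tensor factor. -/
def ptraceFst {a b : Type*} [Fintype a] (M : Matrix (a × b) (a × b) ℂ) : Matrix b b ℂ :=
  Matrix.of fun i j => ∑ k, M (k, i) (k, j)

/-- Partial trace over the second tensor factor. -/
def ptraceSnd {a b : Type*} [Fintype b] (M : Matrix (a × b) (a × b) ℂ) : Matrix a a ℂ :=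
  Matrix.of fun i j => ∑ k, M (i, k) (j, k)

/-- Min-entropy `H_min(A|B)_ρ`, conditioning on the second factor. -/
def Hmin {a b : Type*} [Fintype a] [Fintype b] [DecidableEq a] [DecidableEq b]
    (ρ : Matrix (a × b) (a × b) ℂ) : ℝ :=
  sSup {x : ℝ | ∃ σ : Matrix b b ℂ, IsState σ ∧
    (((2 : ℝ) ^ (-x) : ℝ) • ((1 : Matrix a a ℂ) ⊗ₖ σ) - ρ).PosSemidef}

/-- Max-entropy `H_max(A|B)_ρ`, conditioning on the second factor. -/
def Hmax {a b : Type*} [Fintype a] [Fintype b] [DecidableEq a] [DecidableEq b]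
    (ρ : Matrix (a × b) (a × b) ℂ) : ℝ :=
  sSup {x : ℝ | ∃ σ : Matrix b b ℂ, IsState σ ∧
    x = Real.logb 2 (fidelity ρ ((1 : Matrix a a ℂ) ⊗ₖ σ) ^ 2)}

/-- Smooth min-entropy `H_min^ε(A|B)_ρ`. -/
def sHmin {a b : Type*} [Fintype a] [Fintype b] [DecidableEq a] [DecidableEq b]
    (ε : ℝ) (ρ : Matrix (a × b) (a × b) ℂ) : ℝ :=
  sSup {x : ℝ | ∃ ρ' : Matrix (a × b) (a × b) ℂ,
    IsSubnormalized ρ' ∧ pdist ρ ρ' ≤ ε ∧ x = Hmin ρ'}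

/-- Unconditional min-entropy `H_min(A)_ρ = −log‖ρ‖_∞`. -/
def HminU {n : Type*} [Fintype n] [DecidableEq n] (ρ : Matrix n n ℂ) : ℝ :=
  -Real.logb 2 ‖Matrix.toEuclideanCLM (𝕜 := ℂ) ρ‖

/-- Unconditional max-entropy `H_max(A)_ρ = 2 log tr √ρ`. -/
def HmaxU {n : Type*} [Fintype n] [DecidableEq n] (ρ : Matrix n n ℂ) : ℝ :=
  2 * Real.logb 2 ((psqrt ρ).trace.re)

/-- Smooth unconditional min-entropy. -/
def sHminU {n : Type*} [Fintype n] [DecidableEq n] (ε : ℝ) (ρ : Matrix n n ℂ) : ℝ :=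
  sSup {x : ℝ | ∃ ρ' : Matrix n n ℂ, IsSubnormalized ρ' ∧ pdist ρ ρ' ≤ ε ∧ x = HminU ρ'}

/-- Smooth unconditional max-entropy. -/
def sHmaxU {n : Type*} [Fintype n] [DecidableEq n] (ε : ℝ) (ρ : Matrix n n ℂ) : ℝ :=
  sInf {x : ℝ | ∃ ρ' : Matrix n n ℂ, IsSubnormalized ρ' ∧ pdist ρ ρ' ≤ ε ∧ x = HmaxU ρ'}

/-- Collision entropy `H₂(A|B)_ρ`. -/
def H2 {a b : Type*} [Fintype a] [Fintype b] [DecidableEq a] [DecidableEq b]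
    (ρ : Matrix (a × b) (a × b) ℂ) : ℝ :=
  sSup {x : ℝ | ∃ σ : Matrix b b ℂ, IsState σ ∧
    x = -Real.logb 2
      (((((1 : Matrix a a ℂ) ⊗ₖ mpow σ (-(1/4))) * ρ *
          ((1 : Matrix a a ℂ) ⊗ₖ mpow σ (-(1/4)))) ^ 2).trace.re)}

/-- The extension `𝟙_n ⊗ T` of a linear map `T` on matrices, acting on the second factor. -/
def idTensorLmap {A B n : Type*} [Fintype A] [Fintype B] [Fintype n]
    (T : Matrix A A ℂ →ₗ[ℂ] Matrix B B ℂ) (M : Matrix (n × A) (n × A) ℂ) :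
    Matrix (n × B) (n × B) ℂ :=
  Matrix.of fun i j => T (Matrix.of fun a a' => M (i.1, a) (j.1, a')) i.2 j.2

/-- The extension `T ⊗ 𝟙_n` of a linear map `T` on matrices, acting on the first factor. -/
def lmapTensorId {A B n : Type*} [Fintype A] [Fintype B] [Fintype n]
    (T : Matrix A A ℂ →ₗ[ℂ] Matrix B B ℂ) (M : Matrix (A × n) (A × n) ℂ) :
    Matrix (B × n) (B × n) ℂ :=
  Matrix.of fun i j => T (Matrix.of fun a a' => M (a, i.2) (a', j.2)) i.1 j.1

/-- Complete positivity of a linear map on matrices. -/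
def IsCPM {A B : Type*} [Fintype A] [Fintype B]
    (T : Matrix A A ℂ →ₗ[ℂ] Matrix B B ℂ) : Prop :=
  ∀ (n : ℕ) (M : Matrix (Fin n × A) (Fin n × A) ℂ),
    M.PosSemidef → (idTensorLmap T M).PosSemidef

/-- The projector `|Φ⟩⟨Φ|` onto the maximally entangled state
`|Φ⟩ = |A|^{-1/2} ∑ₓ |x⟩|x⟩`. -/
def maxEntProj (A : Type*) [Fintype A] [DecidableEq A] : Matrix (A × A) (A × A) ℂ :=
  Matrix.of fun p q =>
    ((if p.1 = p.2 then 1 else 0) * (if q.1 = q.2 then 1 else 0)) / (Fintype.card A : ℂ)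

/-- Choi–Jamiołkowski representation `J(T) = (𝟙_{A'} ⊗ T)(|Φ⟩⟨Φ|)`. -/
def choi {A B : Type*} [Fintype A] [Fintype B] [DecidableEq A]
    (T : Matrix A A ℂ →ₗ[ℂ] Matrix B B ℂ) : Matrix (A × B) (A × B) ℂ :=
  idTensorLmap T (maxEntProj A)

/-- Conjugation of a bipartite operator by `U ⊗ 𝟙_E`. -/
def conjFst {A E : Type*} [Fintype A] [Fintype E] [DecidableEq A] [DecidableEq E]
    (U : Matrix.unitaryGroup A ℂ) (ρ : Matrix (A × E) (A × E) ℂ) :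
    Matrix (A × E) (A × E) ℂ :=
  ((U : Matrix A A ℂ) ⊗ₖ (1 : Matrix E E ℂ)) * ρ *
    (((U : Matrix A A ℂ)ᴴ) ⊗ₖ (1 : Matrix E E ℂ))

/-- The swap operator `F(u ⊗ v) = v ⊗ u` as a matrix. -/
def swapMat (A : Type*) [Fintype A] [DecidableEq A] : Matrix (A × A) (A × A) ℂ :=
  Matrix.of fun i j => if i.1 = j.2 ∧ i.2 = j.1 then 1 else 0


attribute [local instance] Matrix.frobeniusNormedAddCommGroup Matrix.frobeniusNormedSpace

/-!
`2^{-H_min(A|B)_ρ}` is the optimal value of the semidefinite program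
`min {c | ρ ≤ c (1 ⊗ σ), σ a state}`, and for a cq state this program decouples along the
classical register. Compressing a feasible `σ_BX` to the block `x` gives `pₓ ρˣ ≤ c (1 ⊗ σₓ)`,
so `tr(σₓ)⁻¹ σₓ` is feasible for `ρˣ` with value `c tr σₓ / pₓ`; summing,
`∑ₓ pₓ 2^{-H_min(ρˣ)} ≤ c ∑ₓ tr σₓ = c`. Conversely, for `c` above that sum, near-optimal
states `σˣ` for the `ρˣ`, weighted and placed on the diagonal blocks, form a feasible `σ_BX`.
-/

open scoped MatrixOrder

namespace Matrix

section Algebra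

variable {m n o α : Type*}

lemma trace_reindex [Fintype m] [Fintype n] [AddCommMonoid α] (e : m ≃ n) (M : Matrix m m α) :
    (reindex e e M).trace = M.trace :=
  Fintype.sum_equiv e.symm _ _ fun _ => rfl

lemma trace_eq_sum_trace_submatrix [Fintype n] [Fintype o] [AddCommMonoid α]
    (M : Matrix (n × o) (n × o) α) : M.trace = ∑ x, (M.submatrix (·, x) (·, x)).trace := by
  simp only [trace, diag, submatrix_apply, Fintype.sum_prod_type]
  exact Finset.sum_comm

variable [DecidableEq o]

lemma sum_kronecker_single_eq_blockDiagonal [Fintype o] [Semiring α] (M : o → Matrix m n α) :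
    ∑ x, M x ⊗ₖ single x x (1 : α) = blockDiagonal M := by
  ext ⟨i, x⟩ ⟨j, y⟩
  simp only [sum_apply, kroneckerMap_apply, single_apply, blockDiagonal_apply, mul_ite, mul_one,
    mul_zero]
  rcases eq_or_ne x y with rfl | hxy
  · simp
  · simp only [hxy, if_false]
    exact Finset.sum_eq_zero fun c _ => if_neg fun h => hxy (h.1.symm.trans h.2)

lemma kronecker_blockDiagonal [Semiring α] (A : Matrix m m α) (N : o → Matrix n n α) :
    A ⊗ₖ blockDiagonal N = reindex (Equiv.prodAssoc m n o) (Equiv.prodAssoc m n o)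
      (blockDiagonal fun x => A ⊗ₖ N x) := by
  ext ⟨i, j, x⟩ ⟨i', j', y⟩
  simp only [kroneckerMap_apply, blockDiagonal_apply, reindex_apply, submatrix_apply,
    Equiv.prodAssoc_symm_apply]
  split_ifs <;> simp [*]

end Algebra

section Order

variable {m n o 𝕜 : Type*} [RCLike 𝕜]

lemma submatrix_mono {A B : Matrix n n 𝕜} (h : A ≤ B) (f : m → n) :
    A.submatrix f f ≤ B.submatrix f f := by
  have := PosSemidef.submatrix h f
  rwa [submatrix_sub] at this

variable [Fintype n]

lemma posSemidef_blockDiagonal [Fintype o] [DecidableEq o] {M : o → Matrix n n 𝕜}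
    (h : ∀ x, (M x).PosSemidef) : (blockDiagonal M).PosSemidef := by
  rw [← sum_kronecker_single_eq_blockDiagonal, ← nonneg_iff_posSemidef]
  refine Finset.sum_nonneg fun x _ => ((h x).kronecker ?_).nonneg
  rw [← diagonal_single]
  exact PosSemidef.diagonal (Pi.single_nonneg.mpr zero_le_one)

lemma blockDiagonal_mono [Fintype o] [DecidableEq o] {M N : o → Matrix n n 𝕜}
    (h : ∀ x, M x ≤ N x) : blockDiagonal M ≤ blockDiagonal N := by
  rw [le_iff, ← blockDiagonal_sub]
  exact posSemidef_blockDiagonal h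

lemma IsHermitian.exists_le_smul_one [DecidableEq n] {A : Matrix n n 𝕜} (hA : A.IsHermitian) :
    ∃ r : ℝ, A ≤ r • 1 := by
  obtain ⟨r, hr⟩ := finite_real_spectrum (A := A) |>.bddAbove
  refine ⟨r, ?_⟩
  rw [← Algebra.algebraMap_eq_smul_one, le_algebraMap_iff_spectrum_le]
  exact fun x hx => hr hx

lemma re_trace_mono {A B : Matrix n n ℂ} (h : A ≤ B) : A.trace.re ≤ B.trace.re := by
  have := (Complex.nonneg_iff.mp (le_iff.mp h).trace_nonneg).1
  rwa [trace_sub, Complex.sub_re, sub_nonneg] at this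

lemma PosSemidef.re_trace_nonneg {A : Matrix n n ℂ} (hA : A.PosSemidef) : 0 ≤ A.trace.re :=
  (Complex.nonneg_iff.mp hA.trace_nonneg).1

lemma PosSemidef.ofReal_re_trace {A : Matrix n n ℂ} (hA : A.PosSemidef) :
    (A.trace.re : ℂ) = A.trace :=
  (Complex.eq_re_of_ofReal_le (r := 0) (by simpa using hA.trace_nonneg)).symm

end Order

end Matrix

section MinEntropy

variable {a b : Type*} [Fintype b] [DecidableEq a] {ρ : Matrix (a × b) (a × b) ℂ} {c : ℝ}

/-- In the paper's notation `c = 2^{-λ}`. -/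
def HminFeasible (ρ : Matrix (a × b) (a × b) ℂ) (c : ℝ) : Prop :=
  ∃ σ : Matrix b b ℂ, IsState σ ∧ ρ ≤ c • ((1 : Matrix a a ℂ) ⊗ₖ σ)

lemma HminFeasible.neg_logb_mem (h : HminFeasible ρ c) (hc : 0 < c) :
    -Real.logb 2 c ∈ {t : ℝ | HminFeasible ρ (2 ^ (-t))} := by
  rwa [Set.mem_ofPred_eq, neg_neg, Real.rpow_logb two_pos (by norm_num) hc]

variable [Fintype a]

lemma HminFeasible.mono (h : HminFeasible ρ c) {d : ℝ} (hcd : c ≤ d) : HminFeasible ρ d := by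
  obtain ⟨σ, hσ, hle⟩ := h
  exact ⟨σ, hσ, hle.trans (smul_le_smul_of_nonneg_right hcd (PosSemidef.one.kronecker hσ.1).nonneg)⟩

lemma one_le_mul_card_mul_trace_re (hρ : ρ.trace = 1) {ω : Matrix b b ℂ}
    (h : ρ ≤ c • ((1 : Matrix a a ℂ) ⊗ₖ ω)) : 1 ≤ c * Fintype.card a * ω.trace.re := by
  simpa [hρ, trace_kronecker, mul_assoc] using Matrix.re_trace_mono h

lemma HminFeasible.one_le_mul_card (hρ : ρ.trace = 1) (h : HminFeasible ρ c) :
    1 ≤ c * Fintype.card a := by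
  obtain ⟨σ, hσ, hle⟩ := h
  simpa [hσ.2] using one_le_mul_card_mul_trace_re hρ hle

lemma HminFeasible.pos (hρ : ρ.trace = 1) (h : HminFeasible ρ c) : 0 < c :=
  pos_of_mul_pos_left (one_pos.trans_le (h.one_le_mul_card hρ)) (Nat.cast_nonneg _)

lemma HminFeasible.of_le_smul_kronecker (hρ : ρ.trace = 1) {ω : Matrix b b ℂ}
    (hω : ω.PosSemidef) (h : ρ ≤ c • ((1 : Matrix a a ℂ) ⊗ₖ ω)) :
    HminFeasible ρ (c * ω.trace.re) := by
  have hq : 0 < ω.trace.re := by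
    have := one_le_mul_card_mul_trace_re hρ h
    refine lt_of_le_of_ne hω.re_trace_nonneg fun h0 => ?_
    rw [← h0, mul_zero] at this
    exact absurd this (by norm_num)
  set q := ω.trace.re
  refine ⟨q⁻¹ • ω, ⟨hω.smul (inv_nonneg.mpr hq.le), ?_⟩, ?_⟩
  · rw [trace_smul, ← hω.ofReal_re_trace, Complex.real_smul, ← Complex.ofReal_mul,
      inv_mul_cancel₀ hq.ne', Complex.ofReal_one]
  · rwa [kronecker_smul, smul_smul, mul_assoc, mul_inv_cancel₀ hq.ne', mul_one]

lemma bddAbove_hminFeasible (hρ : ρ.trace = 1) :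
    BddAbove {t : ℝ | HminFeasible ρ (2 ^ (-t))} := by
  refine ⟨Real.logb 2 (Fintype.card a), fun t ht => ?_⟩
  have h := ht.one_le_mul_card hρ
  have hcard : (0 : ℝ) < Fintype.card a :=
    pos_of_mul_pos_right (one_pos.trans_le h) (Real.rpow_nonneg two_pos.le _)
  rw [Real.le_logb_iff_rpow_le one_lt_two hcard]
  calc (2 : ℝ) ^ t = 2 ^ t * 1 := (mul_one _).symm
    _ ≤ 2 ^ t * (2 ^ (-t) * Fintype.card a) := by gcongr
    _ = Fintype.card a := by rw [← mul_assoc, ← Real.rpow_add two_pos, add_neg_cancel,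
        Real.rpow_zero, one_mul]

variable [DecidableEq b]

lemma Hmin_eq_sSup (ρ : Matrix (a × b) (a × b) ℂ) :
    Hmin ρ = sSup {t : ℝ | HminFeasible ρ (2 ^ (-t))} :=
  rfl

lemma IsState.exists_hminFeasible (hρ : IsState ρ) : ∃ c, HminFeasible ρ c := by
  obtain ⟨r, hr⟩ := hρ.1.isHermitian.exists_le_smul_one
  rw [← one_kronecker_one] at hr
  exact ⟨_, HminFeasible.of_le_smul_kronecker hρ.2 PosSemidef.one hr⟩

lemma rpow_neg_Hmin_le (hρ : ρ.trace = 1) (h : HminFeasible ρ c) : (2 : ℝ) ^ (-Hmin ρ) ≤ c := by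
  have hc := h.pos hρ
  have hle : -Real.logb 2 c ≤ Hmin ρ := le_csSup (bddAbove_hminFeasible hρ) (h.neg_logb_mem hc)
  calc (2 : ℝ) ^ (-Hmin ρ) ≤ 2 ^ Real.logb 2 c :=
        Real.rpow_le_rpow_of_exponent_le one_le_two (by linarith)
    _ = c := Real.rpow_logb two_pos (by norm_num) hc

lemma HminFeasible.of_rpow_neg_Hmin_lt (hρ : IsState ρ) (h : (2 : ℝ) ^ (-Hmin ρ) < c) :
    HminFeasible ρ c := by
  have hc : 0 < c := (Real.rpow_pos_of_pos two_pos _).trans h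
  obtain ⟨c₀, hc₀⟩ := hρ.exists_hminFeasible
  have hlt : -Real.logb 2 c < sSup {t : ℝ | HminFeasible ρ (2 ^ (-t))} := by
    rw [← Hmin_eq_sSup, neg_lt]
    rwa [← Real.rpow_lt_rpow_left_iff one_lt_two, Real.rpow_logb two_pos (by norm_num) hc]
  obtain ⟨t, ht, hlt⟩ := exists_lt_of_lt_csSup ⟨_, hc₀.neg_logb_mem (hc₀.pos hρ.2)⟩ hlt
  refine ht.mono ?_
  calc (2 : ℝ) ^ (-t) ≤ 2 ^ Real.logb 2 c :=
        Real.rpow_le_rpow_of_exponent_le one_le_two (by linarith)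
    _ = c := Real.rpow_logb two_pos (by norm_num) hc

lemma Hmin_eq_neg_logb {K : ℝ} (hK : 0 < K) (hle : ∀ c, HminFeasible ρ c → K ≤ c)
    (hlt : ∀ c, K < c → HminFeasible ρ c) : Hmin ρ = -Real.logb 2 K := by
  have hfeas : ∀ t, t < -Real.logb 2 K → HminFeasible ρ (2 ^ (-t)) := fun t ht =>
    hlt _ (by rwa [← Real.logb_lt_iff_lt_rpow one_lt_two hK, lt_neg])
  refine csSup_eq_of_forall_le_of_forall_lt_exists_gt ⟨_, hfeas _ (sub_one_lt _)⟩
    (fun t ht => ?_) (fun w hw => ?_)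
  · have := (Real.logb_le_iff_le_rpow one_lt_two hK).mpr (hle _ ht)
    linarith
  · obtain ⟨t, hwt, ht⟩ := exists_between hw
    exact ⟨t, hfeas t ht, hwt⟩

end MinEntropy

section ClassicalQuantum

variable {A B X : Type*} [DecidableEq X] {p : X → ℝ} {ρx : X → Matrix (A × B) (A × B) ℂ}

def cqState (p : X → ℝ) (ρx : X → Matrix (A × B) (A × B) ℂ) :
    Matrix (A × (B × X)) (A × (B × X)) ℂ :=
  reindex (Equiv.prodAssoc A B X) (Equiv.prodAssoc A B X) (blockDiagonal fun x => p x • ρx x)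

lemma submatrix_cqState (x : X) :
    (cqState p ρx).submatrix (Prod.map id (·, x)) (Prod.map id (·, x)) = p x • ρx x := by
  ext
  simp [cqState]

variable [Fintype X]

lemma reindex_sum_kronecker_single_eq_cqState (p : X → ℝ) (ρx : X → Matrix (A × B) (A × B) ℂ) :
    reindex (Equiv.prodAssoc A B X) (Equiv.prodAssoc A B X)
      (∑ x, (p x : ℂ) • (ρx x ⊗ₖ single x x (1 : ℂ))) = cqState p ρx := by
  simp_rw [Complex.coe_smul, ← smul_kronecker, sum_kronecker_single_eq_blockDiagonal, cqState]

variable [Fintype A] [Fintype B]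

lemma trace_cqState (hp1 : ∑ x, p x = 1) (hρx : ∀ x, (ρx x).trace = 1) :
    (cqState p ρx).trace = 1 := by
  rw [cqState, trace_reindex, trace_blockDiagonal]
  simp [trace_smul, hρx, ← Complex.ofReal_sum, hp1]

variable [DecidableEq A] [DecidableEq B]

lemma sum_mul_rpow_neg_Hmin_le (hp : ∀ x, 0 ≤ p x) (hp1 : ∑ x, p x = 1)
    (hρx : ∀ x, (ρx x).trace = 1) {c : ℝ} (h : HminFeasible (cqState p ρx) c) :
    ∑ x, p x * 2 ^ (-Hmin (ρx x)) ≤ c := by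
  have hc := (h.pos (trace_cqState hp1 hρx)).le
  obtain ⟨σ, hσ, hle⟩ := h
  let σx x := σ.submatrix (·, x) (·, x)
  have hblock : ∀ x, p x * 2 ^ (-Hmin (ρx x)) ≤ c * (σx x).trace.re := by
    intro x
    have hσx : (σx x).PosSemidef := hσ.1.submatrix _
    have hsub : p x • ρx x ≤ c • ((1 : Matrix A A ℂ) ⊗ₖ σx x) := by
      have := submatrix_mono hle (Prod.map id (·, x))
      rwa [submatrix_cqState, submatrix_smul, Pi.smul_apply, Pi.smul_apply,
        ← kroneckerMap_submatrix_right] at this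
    rcases (hp x).eq_or_lt with hpx | hpx
    · rw [← hpx, zero_mul]
      exact mul_nonneg hc hσx.re_trace_nonneg
    have hρle : ρx x ≤ (c / p x) • ((1 : Matrix A A ℂ) ⊗ₖ σx x) := by
      have := smul_le_smul_of_nonneg_left hsub (inv_nonneg.mpr hpx.le)
      rwa [smul_smul, inv_mul_cancel₀ hpx.ne', one_smul, smul_smul, inv_mul_eq_div] at this
    have := rpow_neg_Hmin_le (hρx x) (HminFeasible.of_le_smul_kronecker (hρx x) hσx hρle)
    rwa [div_mul_eq_mul_div, le_div_iff₀ hpx, mul_comm] at this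
  calc ∑ x, p x * 2 ^ (-Hmin (ρx x)) ≤ ∑ x, c * (σx x).trace.re :=
        Finset.sum_le_sum fun x _ => hblock x
    _ = c := by
      rw [← Finset.mul_sum, ← Complex.re_sum, ← trace_eq_sum_trace_submatrix, hσ.2,
        Complex.one_re, mul_one]

lemma hminFeasible_cqState_of_lt (hp : ∀ x, 0 ≤ p x) (hp1 : ∑ x, p x = 1)
    (hρx : ∀ x, IsState (ρx x)) {c : ℝ} (hc : ∑ x, p x * 2 ^ (-Hmin (ρx x)) < c) :
    HminFeasible (cqState p ρx) c := by
  set K := ∑ x, p x * (2 : ℝ) ^ (-Hmin (ρx x))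
  have hK : 0 ≤ K := Finset.sum_nonneg fun x _ => mul_nonneg (hp x) (Real.rpow_nonneg two_pos.le _)
  -- The common slack `c - K` makes `∑ₓ pₓ cₓ = c` exactly, so the blocks glue to a state.
  set cx : X → ℝ := fun x => 2 ^ (-Hmin (ρx x)) + (c - K)
  have hcx : ∀ x, 0 < cx x := fun x => by
    have := Real.rpow_pos_of_pos two_pos (-Hmin (ρx x))
    simp only [cx]
    linarith
  have hsum : ∑ x, p x * cx x = c := by
    simp only [cx, mul_add, Finset.sum_add_distrib, ← Finset.sum_mul, hp1, K]
    ring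
  have hfeas : ∀ x, HminFeasible (ρx x) (cx x) := fun x =>
    .of_rpow_neg_Hmin_lt (hρx x) (by simp only [cx]; linarith)
  choose σ hσ hle using hfeas
  have hc0 : 0 < c := by linarith
  refine ⟨blockDiagonal fun x => (p x * cx x / c) • σ x,
    ⟨posSemidef_blockDiagonal fun x => (hσ x).1.smul (by have := hcx x; have := hp x; positivity),
      ?_⟩, ?_⟩
  · simp only [trace_blockDiagonal, trace_smul, (hσ _).2, Complex.real_smul, mul_one]
    rw [← Complex.ofReal_sum, ← Finset.sum_div, hsum, div_self hc0.ne', Complex.ofReal_one]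
  calc cqState p ρx
      ≤ reindex (Equiv.prodAssoc A B X) (Equiv.prodAssoc A B X)
          (blockDiagonal fun x => p x • (cx x • ((1 : Matrix A A ℂ) ⊗ₖ σ x))) :=
        submatrix_mono (blockDiagonal_mono fun x => smul_le_smul_of_nonneg_left (hle x) (hp x)) _
    _ = c • ((1 : Matrix A A ℂ) ⊗ₖ blockDiagonal fun x => (p x * cx x / c) • σ x) := by
      have hc' : (c : ℂ) ≠ 0 := by exact_mod_cast hc0.ne'
      rw [kronecker_blockDiagonal]
      ext
      simp only [smul_smul, reindex_apply, submatrix_apply, Equiv.prodAssoc_symm_apply,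
        blockDiagonal_apply, Matrix.smul_apply, kroneckerMap_apply, Complex.real_smul,
        Complex.ofReal_mul, Complex.ofReal_div, smul_ite, smul_zero]
      split_ifs <;> field_simp

end ClassicalQuantum

/-- **Min-entropy of classical-quantum states.** -/
theorem Hmin_cq_state
    {A B X : Type*} [Fintype A] [DecidableEq A] [Fintype B] [DecidableEq B]
    [Fintype X] [DecidableEq X]
    (p : X → ℝ) (hp : ∀ x, 0 ≤ p x) (hp1 : ∑ x, p x = 1)
    (ρx : X → Matrix (A × B) (A × B) ℂ) (hρx : ∀ x, IsState (ρx x))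
    (ρ : Matrix (A × (B × X)) (A × (B × X)) ℂ)
    (hρ : ρ = Matrix.reindex (Equiv.prodAssoc A B X) (Equiv.prodAssoc A B X)
      (∑ x, (p x : ℂ) • (ρx x ⊗ₖ Matrix.single x x (1 : ℂ)))) :
    Hmin ρ = -Real.logb 2 (∑ x, p x * (2 : ℝ) ^ (-Hmin (ρx x))) := by
  rw [hρ, reindex_sum_kronecker_single_eq_cqState]
  obtain ⟨x₀, -, hx₀⟩ :=
    Finset.exists_lt_of_sum_lt (show ∑ _ : X, (0 : ℝ) < ∑ x, p x by simp [hp1])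
  have hK : 0 < ∑ x, p x * (2 : ℝ) ^ (-Hmin (ρx x)) :=
    Finset.sum_pos' (fun x _ => mul_nonneg (hp x) (Real.rpow_nonneg two_pos.le _))
      ⟨x₀, Finset.mem_univ _, mul_pos hx₀ (Real.rpow_pos_of_pos two_pos _)⟩
  exact Hmin_eq_neg_logb hK (fun c => sum_mul_rpow_neg_Hmin_le hp hp1 fun x => (hρx x).2)
    fun c => hminFeasible_cqState_of_lt hp hp1 hρx
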